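/- For any A ∈ M_n(ℂ), every point of F_N(A) is the image under h(v) = (v_1 + iv_2)/√v_3 of a point of the topological boundary of DW(A) with positive third coordinate. -/

import Mathlib

open Matrix

noncomputable def fN {n : ℕ} (A : Matrix (Fin n) (Fin n) ℂ)
    (x : EuclideanSpace ℂ (Fin n)) : ℂ :=
  (inner ℂ x (Matrix.toEuclideanLin A x) : ℂ) /
    ((‖x‖ * ‖Matrix.toEuclideanLin A x‖ : ℝ) : ℂ)

noncomputable def FN {n : ℕ} (A : Matrix (Fin n) (Fin n) ℂ) : Set ℂ :=
  {z | ∃ x : EuclideanSpace ℂ (Fin n), Matrix.toEuclideanLin A x ≠ 0 ∧ z = fN A x}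

noncomputable def DW {n : ℕ} (A : Matrix (Fin n) (Fin n) ℂ) : Set (ℝ × ℝ × ℝ) :=
  {v | ∃ x : EuclideanSpace ℂ (Fin n), ‖x‖ = 1 ∧
    v = ((inner ℂ x (Matrix.toEuclideanLin A x) : ℂ).re,
         (inner ℂ x (Matrix.toEuclideanLin A x) : ℂ).im,
         ‖Matrix.toEuclideanLin A x‖ ^ 2)}

noncomputable def hmap (v : ℝ × ℝ × ℝ) : ℂ :=
  ((v.1 : ℂ) + (v.2.1 : ℂ) * Complex.I) / ((Real.sqrt v.2.2 : ℝ) : ℂ)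

/-! The map `hmap` is constant along the curves `s ↦ (s v₁, s v₂, s² v₃)`, `s > 0`. Starting from
a point of `DW A` above a given point of `F_N(A)` and following its curve until it leaves the
bounded set `DW A`, one meets the frontier of `DW A`. -/

def weightedDilation (s : ℝ) (v : ℝ × ℝ × ℝ) : ℝ × ℝ × ℝ :=
  (s * v.1, s * v.2.1, s ^ 2 * v.2.2)

lemma hmap_weightedDilation {s : ℝ} (hs : 0 < s) (v : ℝ × ℝ × ℝ) :
    hmap (weightedDilation s v) = hmap v := by
  have hsqrt : Real.sqrt (s ^ 2 * v.2.2) = s * Real.sqrt v.2.2 := by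
    rw [Real.sqrt_mul (sq_nonneg s), Real.sqrt_sq hs.le]
  have hs' : (s : ℂ) ≠ 0 := by exact_mod_cast hs.ne'
  simp only [hmap, weightedDilation, hsqrt]
  push_cast
  field_simp

lemma exists_weightedDilation_mem_frontier {K : Set (ℝ × ℝ × ℝ)} (hK : Bornology.IsBounded K)
    {v : ℝ × ℝ × ℝ} (hv : v ∈ K) (hv₃ : 0 < v.2.2) :
    ∃ s > 0, weightedDilation s v ∈ frontier K := by
  -- Parametrising the scale by `exp t` keeps every frontier point at a positive scale.
  set γ : ℝ → ℝ × ℝ × ℝ := fun t => weightedDilation (Real.exp t) v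
  have hγ : Continuous γ := by unfold γ weightedDilation; fun_prop
  obtain ⟨C, hC⟩ := hK.exists_norm_le
  obtain ⟨t₁, ht₁⟩ : ∃ t, C < (γ t).2.2 :=
    (((Filter.tendsto_pow_atTop two_ne_zero).comp Real.tendsto_exp_atTop).atTop_mul_const hv₃
      |>.eventually_gt_atTop C).exists
  have hnonempty : (γ ⁻¹' K).Nonempty := ⟨0, by simpa [γ, weightedDilation] using hv⟩
  have hne_univ : γ ⁻¹' K ≠ Set.univ := fun h => by
    have hmem : t₁ ∈ γ ⁻¹' K := h ▸ Set.mem_univ t₁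
    have : (γ t₁).2.2 ≤ C :=
      (Real.le_norm_self _).trans ((norm_snd_le _).trans ((norm_snd_le _).trans (hC _ hmem)))
    linarith
  obtain ⟨t, ht⟩ := nonempty_frontier_iff.mpr ⟨hnonempty, hne_univ⟩
  exact ⟨Real.exp t, Real.exp_pos t, hγ.frontier_preimage_subset K ht⟩

section DavisWielandt

variable {n : ℕ} (A : Matrix (Fin n) (Fin n) ℂ)

noncomputable def dwPoint (x : EuclideanSpace ℂ (Fin n)) : ℝ × ℝ × ℝ :=
  ((inner ℂ x (toEuclideanLin A x) : ℂ).re, (inner ℂ x (toEuclideanLin A x) : ℂ).im,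
    ‖toEuclideanLin A x‖ ^ 2)

lemma DW_eq_image_sphere : DW A = dwPoint A '' Metric.sphere 0 1 := by
  ext v
  simp [DW, dwPoint, eq_comm]

lemma isCompact_DW : IsCompact (DW A) := by
  have hT : Continuous (toEuclideanLin A) := LinearMap.continuous_of_finiteDimensional _
  rw [DW_eq_image_sphere]
  exact (isCompact_sphere _ _).image (by unfold dwPoint; fun_prop)

lemma fN_smul {c : ℂ} (hc : c ≠ 0) (x : EuclideanSpace ℂ (Fin n)) :
    fN A (c • x) = fN A x := by
  have hc' : (‖c‖ : ℂ) ≠ 0 := by exact_mod_cast norm_ne_zero_iff.mpr hc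
  simp only [fN, map_smul, inner_smul_left, inner_smul_right, norm_smul]
  rw [← mul_assoc, Complex.mul_conj']
  push_cast
  rw [mul_mul_mul_comm, ← sq, mul_div_mul_left _ _ (pow_ne_zero 2 hc')]

lemma hmap_dwPoint {x : EuclideanSpace ℂ (Fin n)} (hx : ‖x‖ = 1) :
    hmap (dwPoint A x) = fN A x := by
  simp [hmap, dwPoint, fN, hx, Complex.re_add_im]

lemma exists_mem_DW_hmap_eq_fN {x : EuclideanSpace ℂ (Fin n)} (hAx : toEuclideanLin A x ≠ 0) :
    ∃ v ∈ DW A, 0 < v.2.2 ∧ hmap v = fN A x := by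
  have hx : x ≠ 0 := fun h => hAx (by simp [h])
  have hc : ((‖x‖⁻¹ : ℝ) : ℂ) ≠ 0 := by simpa using hx
  set y := ((‖x‖⁻¹ : ℝ) : ℂ) • x
  have hy : ‖y‖ = 1 := by
    rw [norm_smul, Complex.norm_real, Real.norm_eq_abs, abs_inv, abs_norm,
      inv_mul_cancel₀ (norm_ne_zero_iff.mpr hx)]
  have hAy : toEuclideanLin A y ≠ 0 := by simpa [y, map_smul] using And.intro hx hAx
  refine ⟨dwPoint A y, DW_eq_image_sphere A ▸ ⟨y, by simpa using hy, rfl⟩, ?_, ?_⟩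
  · exact pow_pos (norm_pos_iff.mpr hAy) 2
  · rw [hmap_dwPoint A hy, fN_smul A hc]

end DavisWielandt

theorem stmt11 {n : ℕ} (A : Matrix (Fin n) (Fin n) ℂ) :
    ∀ z ∈ FN A, ∃ v ∈ frontier (DW A), 0 < v.2.2 ∧ z = hmap v := by
  rintro z ⟨x, hAx, rfl⟩
  obtain ⟨v, hv, hv₃, hvx⟩ := exists_mem_DW_hmap_eq_fN A hAx
  obtain ⟨s, hs, hfront⟩ := exists_weightedDilation_mem_frontier (isCompact_DW A).isBounded hv hv₃
  refine ⟨weightedDilation s v, hfront, by simp only [weightedDilation]; positivity, ?_⟩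
  rw [hmap_weightedDilation hs, hvx]
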